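/- Let n ≥ 2, let δ ∈ ℝ be a root of an irreducible polynomial of degree n with rational coefficients, and let C be an invertible n×n matrix with rational entries. Define a = (a_1, …, a_n) by a_i = Σ_{j=1}^n C_{ij}·δ^j. Then a_1, …, a_n form a ℚ-basis of the real algebraic number field ℚ(δ) (so a is ℚ(δ)-algebraic with θ = 1), and consequently M(a) is a finite-index subgroup of the unit group 𝓞_{ℚ(δ)}^×. -/

import Mathlib

open Matrix

/-- The multiplier set of a frequency vector `a`: the set of real numbers `α`
such that some integer matrix `B` of determinant `±1` satisfies `B · a = α • a`. -/
def MultSet {n : ℕ} (a : Fin n → ℝ) : Set ℝ :=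
  {α : ℝ | ∃ B : Matrix (Fin n) (Fin n) ℤ,
    (B.det = 1 ∨ B.det = -1) ∧ ∀ i, α * a i = ∑ j, (B i j : ℝ) * a j}

/-- `a` is `F`-algebraic: for some nonzero `θ`, the numbers `θ * a i` lie in `F`
and form a `ℚ`-basis of `F`. -/
def IsFAlgebraic {n : ℕ} (F : Subfield ℝ) (a : Fin n → ℝ) : Prop :=
  ∃ θ : ℝ, θ ≠ 0 ∧ ∃ bas : Module.Basis (Fin n) ℚ F, ∀ i, (bas i : ℝ) = θ * a i

/-- `MultSet a` is a finite-index subgroup of the unit group of the ring of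
integers of `F`: every multiplier is a unit of `𝓞_F`, and finitely many units
`u i` suffice so that every unit of `𝓞_F` is some `u i` times a multiplier. -/
def MultSetFiniteIndexUnits {n : ℕ} (a : Fin n → ℝ) (F : Subfield ℝ) : Prop :=
  (∀ α ∈ MultSet a, ∃ u : (integralClosure ℤ F)ˣ,
      (((u : integralClosure ℤ F) : F) : ℝ) = α) ∧
  ∃ m : ℕ, ∃ u : Fin m → (integralClosure ℤ F)ˣ,
    ∀ v : (integralClosure ℤ F)ˣ, ∃ i : Fin m, ∃ α ∈ MultSet a,
      (((v : integralClosure ℤ F) : F) : ℝ)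
        = (((u i : integralClosure ℤ F) : F) : ℝ) * α

/-!
The powers `δ, …, δⁿ` form a `ℚ`-basis of `ℚ(δ)` (`δ ≠ 0` since its minimal polynomial has
degree `n ≥ 2`), and the invertible matrix `C` carries it to the basis `a`.

If `α • a = B *ᵥ a` with `B ∈ GLₙ(ℤ)`, then `α` and `α⁻¹` (through `B⁻¹`) preserve the lattice
`L = ℤ a₁ + ⋯ + ℤ aₙ`, so both are integral over `ℤ` and `α` is a unit of `𝓞`. Conversely,
comparing `L` with an integral basis of `𝓞` gives an integer `d ≠ 0` with `d 𝓞 L ⊆ L`; then every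
unit `≡ 1 mod d` preserves `L`, hence lies in `M(a)`, and these units form the kernel of
`𝓞ˣ → (𝓞 / d)ˣ`, a subgroup of finite index.
-/

theorem linearIndependent_pow_succ {K S : Type*} [Field K] [Ring S] [IsDomain S] [Algebra K S]
    {x : S} (hx : x ≠ 0) :
    LinearIndependent K fun i : Fin (minpoly K x).natDegree => x ^ ((i : ℕ) + 1) := by
  simpa only [Function.comp_def, LinearMap.mulLeft_apply, ← pow_succ'] using
    (linearIndependent_pow (K := K) x).map'
      (LinearMap.mulLeft K x) (LinearMap.ker_eq_bot.mpr (mul_right_injective₀ hx))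

theorem LinearIndependent.sum_smul_of_det_ne_zero {K V : Type*} [Field K] [AddCommGroup V]
    [Module K V] {n : ℕ} {v : Fin n → V} (hv : LinearIndependent K v) {C : Matrix (Fin n) (Fin n) K}
    (hC : C.det ≠ 0) : LinearIndependent K fun i => ∑ j, C i j • v j :=
  (Matrix.linearIndependent_rows_of_isUnit (C.isUnit_iff_isUnit_det.mpr hC.isUnit)).map'
    (Fintype.linearCombination K v)
    (LinearMap.ker_eq_bot.mpr hv.fintypeLinearCombination_injective)

theorem IntermediateField.adjoin_rat_toSubfield {E : Type*} [Field E] [CharZero E] (S : Set E) :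
    (IntermediateField.adjoin ℚ S).toSubfield = Subfield.closure S := by
  rw [IntermediateField.adjoin_toSubfield]
  refine le_antisymm (Subfield.closure_le.mpr (Set.union_subset ?_ Subfield.subset_closure))
    (Subfield.closure_mono Set.subset_union_right)
  rintro _ ⟨q, rfl⟩
  exact SubfieldClass.ratCast_mem _ q

theorem finrank_subfieldClosure_singleton {E : Type*} [Field E] [CharZero E] {x : E}
    (hx : IsIntegral ℚ x) :
    Module.finrank ℚ (Subfield.closure {x}) = (minpoly ℚ x).natDegree := by
  rw [← IntermediateField.adjoin_rat_toSubfield, ← IntermediateField.adjoin.finrank hx]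
  rfl

theorem exists_basis_subfieldClosure_singleton {E : Type*} [Field E] [CharZero E] {x : E}
    (hx : IsIntegral ℚ x) (hx0 : x ≠ 0) {n : ℕ} (hn : (minpoly ℚ x).natDegree = n)
    {C : Matrix (Fin n) (Fin n) ℚ} (hC : C.det ≠ 0) :
    ∃ b : Module.Basis (Fin n) ℚ (Subfield.closure {x}),
      ∀ i, (b i : E) = ∑ j, (C i j : E) * x ^ ((j : ℕ) + 1) := by
  set F := Subfield.closure {x}
  have hxF : x ∈ F := Subfield.subset_closure rfl
  let v (i : Fin n) : F := ⟨∑ j, (C i j : E) * x ^ ((j : ℕ) + 1),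
    sum_mem fun j _ => mul_mem (SubfieldClass.ratCast_mem _ _) (pow_mem hxF _)⟩
  have hpow : LinearIndependent ℚ fun j : Fin n => x ^ ((j : ℕ) + 1) :=
    (linearIndependent_pow_succ hx0).comp (Fin.cast hn.symm) (Fin.cast_injective _)
  have hv : LinearIndependent ℚ v := by
    have h := hpow.sum_smul_of_det_ne_zero hC
    simp only [Rat.smul_def] at h
    exact .of_comp F.subtype.toRatAlgHom.toLinearMap h
  have : Nonempty (Fin n) := ⟨⟨0, hn ▸ minpoly.natDegree_pos hx⟩⟩
  exact ⟨basisOfLinearIndependentOfCardEqFinrank hv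
    (by rw [Fintype.card_fin, finrank_subfieldClosure_singleton hx, hn]), fun i => by simp [v]⟩

section Multipliers

variable {n : ℕ} {a : Fin n → ℝ} {α : ℝ}

theorem mem_multSet_iff :
    α ∈ MultSet a ↔ ∃ B : Matrix (Fin n) (Fin n) ℤ,
      IsUnit B.det ∧ α • a = (Int.castRingHom ℝ).mapMatrix B *ᵥ a := by
  simp [MultSet, Int.isUnit_iff, funext_iff, Matrix.mulVec, dotProduct]

theorem mul_mem_span_of_mem_multSet (hα : α ∈ MultSet a) (i : Fin n) :
    α * a i ∈ Submodule.span ℤ (Set.range a) := by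
  obtain ⟨B, -, hB⟩ := hα
  exact (Submodule.mem_span_range_iff_exists_fun ℤ).mpr ⟨B i, by simp [hB, zsmul_eq_mul]⟩

theorem ne_zero_and_inv_mem_multSet (ha : a ≠ 0) (hα : α ∈ MultSet a) :
    α ≠ 0 ∧ α⁻¹ ∈ MultSet a := by
  obtain ⟨B, hB, hBa⟩ := mem_multSet_iff.mp hα
  have hinv : α • ((Int.castRingHom ℝ).mapMatrix B⁻¹ *ᵥ a) = a := by
    rw [← Matrix.mulVec_smul, hBa, Matrix.mulVec_mulVec, ← map_mul,
      Matrix.nonsing_inv_mul B hB, map_one, Matrix.one_mulVec]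
  have hα0 : α ≠ 0 := by
    rintro rfl
    exact ha (by simpa using hinv.symm)
  exact ⟨hα0, mem_multSet_iff.mpr ⟨B⁻¹, B.isUnit_nonsing_inv_det hB,
    by rw [inv_smul_eq_iff₀ hα0, hinv]⟩⟩

theorem isIntegral_of_mem_multSet (ha : a ≠ 0) (hα : α ∈ MultSet a) : IsIntegral ℤ α := by
  refine isIntegral_of_smul_mem_submodule (Submodule.span ℤ (Set.range a)) ?_
    (Submodule.fg_span (Set.finite_range a)) α fun x hx => ?_
  · simpa [Submodule.span_eq_bot, funext_iff] using ha
  · have hle : Submodule.span ℤ (Set.range a) ≤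
        (Submodule.span ℤ (Set.range a)).comap (LinearMap.mulLeft ℤ α) :=
      Submodule.span_le.mpr (Set.range_subset_iff.mpr (mul_mem_span_of_mem_multSet hα))
    exact hle hx

theorem mem_subfield_of_mem_multSet {F : Subfield ℝ} (haF : ∀ i, a i ∈ F) (ha : a ≠ 0)
    (hα : α ∈ MultSet a) : α ∈ F := by
  obtain ⟨i, hi⟩ := Function.ne_iff.mp ha
  obtain ⟨B, -, hB⟩ := hα
  have : α = (∑ j, (B i j : ℝ) * a j) / a i := by rw [← hB, mul_div_cancel_right₀ _ hi]
  rw [this]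
  exact div_mem (sum_mem fun j _ => mul_mem (intCast_mem _ _) (haF j)) (haF i)

theorem exists_intMatrix_of_mul_mem_span (h : ∀ i, α * a i ∈ Submodule.span ℤ (Set.range a)) :
    ∃ B : Matrix (Fin n) (Fin n) ℤ, α • a = (Int.castRingHom ℝ).mapMatrix B *ᵥ a := by
  choose B hB using fun i => (Submodule.mem_span_range_iff_exists_fun ℤ).mp (h i)
  exact ⟨Matrix.of B, funext fun i => by simp [← hB, Matrix.mulVec, dotProduct, zsmul_eq_mul]⟩

theorem Matrix.eq_zero_of_intCast_mulVec_eq_zero (ha : LinearIndependent ℤ a)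
    {M : Matrix (Fin n) (Fin n) ℤ} (hM : (Int.castRingHom ℝ).mapMatrix M *ᵥ a = 0) : M = 0 :=
  Matrix.ext fun i => Fintype.linearIndependent_iff.mp ha (M i) (by
    simpa [Matrix.mulVec, dotProduct, zsmul_eq_mul] using congrFun hM i)

theorem mem_multSet_of_mul_mem_span (ha : LinearIndependent ℤ a) {β : ℝ} (hαβ : α * β = 1)
    (hα : ∀ i, α * a i ∈ Submodule.span ℤ (Set.range a))
    (hβ : ∀ i, β * a i ∈ Submodule.span ℤ (Set.range a)) : α ∈ MultSet a := by
  obtain ⟨B, hB⟩ := exists_intMatrix_of_mul_mem_span hα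
  obtain ⟨B', hB'⟩ := exists_intMatrix_of_mul_mem_span hβ
  have hBB' : B * B' = 1 := by
    refine sub_eq_zero.mp (Matrix.eq_zero_of_intCast_mulVec_eq_zero ha ?_)
    rw [map_sub, map_mul, map_one, Matrix.sub_mulVec, ← Matrix.mulVec_mulVec, ← hB',
      Matrix.mulVec_smul, ← hB, smul_smul, mul_comm, hαβ, one_smul, Matrix.one_mulVec, sub_self]
  exact mem_multSet_iff.mpr ⟨B, IsUnit.of_mul_eq_one _ (by rw [← Matrix.det_mul, hBB',
    Matrix.det_one]), hB⟩

end Multipliers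

theorem exists_unit_eq_of_mem_multSet {n : ℕ} {a : Fin n → ℝ} {α : ℝ} {F : Subfield ℝ}
    (haF : ∀ i, a i ∈ F) (ha : a ≠ 0) (hα : α ∈ MultSet a) :
    ∃ u : (integralClosure ℤ F)ˣ, (((u : integralClosure ℤ F) : F) : ℝ) = α := by
  have hint {β : ℝ} (hβ : β ∈ MultSet a) : ∃ hβF : β ∈ F, IsIntegral ℤ (⟨β, hβF⟩ : F) :=
    ⟨mem_subfield_of_mem_multSet haF ha hβ, (isIntegral_algHom_iff F.subtype.toIntAlgHom
      Subtype.val_injective).mp (isIntegral_of_mem_multSet ha hβ)⟩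
  obtain ⟨hα0, hαinv⟩ := ne_zero_and_inv_mem_multSet ha hα
  obtain ⟨_, hαint⟩ := hint hα
  obtain ⟨_, hαinvint⟩ := hint hαinv
  exact ⟨⟨⟨_, hαint⟩, ⟨_, hαinvint⟩, Subtype.ext (Subtype.ext (mul_inv_cancel₀ hα0)),
    Subtype.ext (Subtype.ext (inv_mul_cancel₀ hα0))⟩, rfl⟩

theorem Subfield.coe_mem_span_range_coe {E ι : Type*} [Field E] {F : Subfield E} {v : ι → F}
    {x : F} (hx : x ∈ Submodule.span ℤ (Set.range v)) :
    (x : E) ∈ Submodule.span ℤ (Set.range fun i => (v i : E)) := by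
  simpa [← Set.range_comp, Function.comp_def] using
    Submodule.apply_mem_span_image_of_mem_span F.subtype.toIntAlgHom.toLinearMap hx

theorem Module.Basis.exists_int_smul_mem_span {V ι κ : Type*} [AddCommGroup V] [Module ℚ V]
    [Fintype ι] [Finite κ] (b : Module.Basis ι ℚ V) (c : κ → V) :
    ∃ m : ℤ, m ≠ 0 ∧
      ∀ x ∈ Submodule.span ℤ (Set.range c), m • x ∈ Submodule.span ℤ (Set.range b) := by
  obtain ⟨⟨m, hm⟩, hint⟩ := IsLocalization.exist_integer_multiples_of_finite (nonZeroDivisors ℤ)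
    fun p : κ × ι => b.repr (c p.1) p.2
  have hc (k : κ) : m • c k ∈ Submodule.span ℤ (Set.range b) := by
    rw [← b.sum_repr (c k), Finset.smul_sum]
    refine sum_mem fun i _ => ?_
    obtain ⟨z, hz⟩ := hint (k, i)
    rw [← smul_assoc, ← hz, algebraMap_int_eq, eq_intCast, Int.cast_smul_eq_zsmul]
    exact Submodule.smul_mem _ z (Submodule.subset_span ⟨i, rfl⟩)
  have hle : Submodule.span ℤ (Set.range c) ≤
      (Submodule.span ℤ (Set.range b)).comap (m • LinearMap.id) :=
    Submodule.span_le.mpr (Set.range_subset_iff.mpr hc)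
  exact ⟨m, nonZeroDivisors.ne_zero hm, fun x hx => hle hx⟩

theorem NumberField.exists_int_mul_mem_span {K ι : Type*} [Field K] [NumberField K] [Fintype ι]
    (b : Module.Basis ι ℚ K) :
    ∃ d : ℤ, d ≠ 0 ∧ ∀ w ∈ integralClosure ℤ K, ∀ l ∈ Submodule.span ℤ (Set.range b),
      (d : K) * w * l ∈ Submodule.span ℤ (Set.range b) := by
  obtain ⟨m₁, hm₁, h₁⟩ := (integralBasis K).exists_int_smul_mem_span b
  obtain ⟨m₂, hm₂, h₂⟩ := b.exists_int_smul_mem_span (integralBasis K)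
  refine ⟨m₁ * m₂, mul_ne_zero hm₁ hm₂, fun w hw l hl => ?_⟩
  obtain ⟨y, hy⟩ := (mem_span_integralBasis K).mp (h₁ l hl)
  let w' : RingOfIntegers K := ⟨w, hw⟩
  have hwl : w * (m₁ • l) ∈ Submodule.span ℤ (Set.range (integralBasis K)) :=
    (mem_span_integralBasis K).mpr ⟨w' * y, by rw [map_mul, hy]; rfl⟩
  convert h₂ _ hwl using 1
  rw [zsmul_eq_mul, zsmul_eq_mul]
  push_cast
  ring

theorem Units.mem_ker_map_quotientMk_iff {R : Type*} [CommRing R] {I : Ideal R} {u : Rˣ} :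
    u ∈ (Units.map (Ideal.Quotient.mk I : R →* R ⧸ I)).ker ↔ (u : R) - 1 ∈ I := by
  rw [MonoidHom.mem_ker, Units.ext_iff, Units.coe_map, Units.val_one, MonoidHom.coe_coe,
    ← map_one (Ideal.Quotient.mk I), Ideal.Quotient.eq]

theorem Subgroup.exists_fin_eq_mul_mem {G : Type*} [Group G] (H : Subgroup G) [H.FiniteIndex] :
    ∃ m : ℕ, ∃ u : Fin m → G, ∀ g, ∃ i, ∃ h ∈ H, g = u i * h := by
  obtain ⟨m, ⟨e⟩⟩ := Finite.exists_equiv_fin (G ⧸ H)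
  refine ⟨m, fun i => (e.symm i).out, fun g => ⟨e g, _, QuotientGroup.eq.mp ?_,
    (mul_inv_cancel_left _ _).symm⟩⟩
  simp

theorem exists_fin_units_mul_mem_multSet {F : Subfield ℝ} [NumberField F] {n : ℕ}
    (b : Module.Basis (Fin n) ℚ F) :
    ∃ m : ℕ, ∃ u : Fin m → (integralClosure ℤ F)ˣ,
      ∀ v : (integralClosure ℤ F)ˣ, ∃ i : Fin m, ∃ α ∈ MultSet fun j => (b j : ℝ),
        (((v : integralClosure ℤ F) : F) : ℝ) = (((u i : integralClosure ℤ F) : F) : ℝ) * α := by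
  obtain ⟨d, hd0, hd⟩ := NumberField.exists_int_mul_mem_span b
  let O := integralClosure ℤ F
  let I : Ideal O := Ideal.span {(d : O)}
  let H := (Units.map (Ideal.Quotient.mk I : O →* O ⧸ I)).ker
  have : Module.Free ℤ O := inferInstanceAs (Module.Free ℤ (NumberField.RingOfIntegers F))
  have : Module.Finite ℤ O := inferInstanceAs (Module.Finite ℤ (NumberField.RingOfIntegers F))
  have : Finite (O ⧸ I) := I.finiteQuotientOfFreeOfNeBot (by simpa [I] using hd0)
  have hstab (s : Oˣ) (hs : s ∈ H) (i : Fin n) :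
      ((s : O) : F) * b i ∈ Submodule.span ℤ (Set.range b) := by
    obtain ⟨w, hw⟩ := Ideal.mem_span_singleton'.mp (Units.mem_ker_map_quotientMk_iff.mp hs)
    have hs' : ((s : O) : F) = 1 + (d : F) * (w : F) := by
      have hwF := congrArg (fun x : O => (x : F)) hw
      push_cast at hwF
      linear_combination -hwF
    have hbi : b i ∈ Submodule.span ℤ (Set.range b) := Submodule.subset_span ⟨i, rfl⟩
    rw [hs', add_mul, one_mul]
    exact add_mem hbi (hd w w.2 _ hbi)
  have hlin : LinearIndependent ℤ fun j => (b j : ℝ) :=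
    (b.linearIndependent.restrict_scalars' ℤ).map' F.subtype.toIntAlgHom.toLinearMap
      (LinearMap.ker_eq_bot.mpr Subtype.val_injective)
  obtain ⟨m, u, hu⟩ := H.exists_fin_eq_mul_mem
  refine ⟨m, u, fun v => ?_⟩
  obtain ⟨i, s, hs, rfl⟩ := hu v
  refine ⟨i, _, mem_multSet_of_mul_mem_span hlin (β := (((s⁻¹ : Oˣ) : O) : F))
    (by exact_mod_cast congrArg (fun x : O => ((x : F) : ℝ)) s.mul_inv)
    (fun j => Subfield.coe_mem_span_range_coe (hstab s hs j))
    (fun j => Subfield.coe_mem_span_range_coe (hstab _ (inv_mem hs) j)), by simp⟩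

theorem multSetFiniteIndexUnits_of_basis {F : Subfield ℝ} [NumberField F] {n : ℕ}
    (b : Module.Basis (Fin n) ℚ F) : MultSetFiniteIndexUnits (fun i => (b i : ℝ)) F := by
  have hn : 0 < n := by
    simpa [Module.finrank_eq_card_basis b] using Module.finrank_pos (R := ℚ) (M := F)
  have hb0 : (fun i => (b i : ℝ)) ≠ 0 := fun h =>
    b.ne_zero ⟨0, hn⟩ (Subtype.ext (congrFun h _))
  exact ⟨fun α hα => exists_unit_eq_of_mem_multSet (fun i => (b i).2) hb0 hα,
    exists_fin_units_mul_mem_multSet b⟩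

/-- for `δ` a real root of an irreducible rational polynomial of
degree `n` and `C` an invertible rational matrix, the numbers
`a i = ∑ j, C i j * δ ^ (j+1)` form a `ℚ`-basis of `ℚ(δ)` (so `a` is
`ℚ(δ)`-algebraic with `θ = 1`), and `M(a)` is a finite-index subgroup of the
unit group of the ring of integers of `ℚ(δ)`. -/
theorem qdelta_flow_example {n : ℕ} (hn : 2 ≤ n) (δ : ℝ)
    (p : Polynomial ℚ) (hp : Irreducible p) (hdeg : p.degree = n)
    (hroot : Polynomial.aeval δ p = 0)
    (C : Matrix (Fin n) (Fin n) ℚ) (hC : C.det ≠ 0)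
    (a : Fin n → ℝ) (ha : ∀ i, a i = ∑ j, (C i j : ℝ) * δ ^ ((j : ℕ) + 1)) :
    (∃ bas : Module.Basis (Fin n) ℚ (Subfield.closure {δ} : Subfield ℝ),
      ∀ i, (bas i : ℝ) = a i) ∧
    MultSetFiniteIndexUnits a (Subfield.closure {δ} : Subfield ℝ) := by
  have hδ : IsIntegral ℚ δ := IsAlgebraic.isIntegral ⟨p, hp.ne_zero, hroot⟩
  have hminpoly : (minpoly ℚ δ).natDegree = n := by
    rw [← minpoly.eq_of_irreducible hp hroot, Polynomial.natDegree_mul_C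
      (inv_ne_zero (Polynomial.leadingCoeff_ne_zero.mpr hp.ne_zero)),
      Polynomial.natDegree_eq_of_degree_eq_some hdeg]
  have hδ0 : δ ≠ 0 := by
    rintro rfl
    rw [minpoly.zero, Polynomial.natDegree_X] at hminpoly
    omega
  obtain ⟨b, hb⟩ := exists_basis_subfieldClosure_singleton hδ hδ0 hminpoly hC
  obtain rfl : (fun i => (b i : ℝ)) = a := funext fun i => (hb i).trans (ha i).symm
  have : FiniteDimensional ℚ (Subfield.closure {δ}) := Module.Finite.of_basis b
  have : NumberField (Subfield.closure {δ}) := ⟨⟩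
  exact ⟨⟨b, fun _ => rfl⟩, multSetFiniteIndexUnits_of_basis b⟩
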